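/- Under the same setup (P* row-stochastic, φ stationary for P*, s > 0, e the all-ones vector, and assuming (e^{D0 s} P*)ᵏ → 0 as k → ∞ so that I - e^{D0 s} P* is invertible), define P(L = 0) = 1 - φ e^{D0 s} e and, for n ≥ 1, P(L = n) = φ (e^{D0 s} P*)ⁿ (I - e^{D0 s}) P* e. Then ∑_{n=0}^∞ P(L = n) = 1. -/

import Mathlib

/-!
Since `P* e = e`, every term equals `φ Qᵐ (I - Q) e` with `Q = e^{D0 s} P*`; for `m = 0` this
uses `φ e = 1`. Because `Qᵏ → 0`, some power of `Q` has norm `< 1`, so `∑ Qᵐ` converges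
absolutely, and then `(∑ Qᵐ)(I - Q) = I`. Applying `M ↦ φ M e` gives the sum `φ e = 1`.
-/

open Matrix Filter Topology

theorem norm_pow_mul_add_le {R : Type*} [NormedRing R] (x : R) (N q r : ℕ) :
    ‖x ^ (q * N + r)‖ ≤ ‖x ^ N‖ ^ q * ‖x ^ r‖ := by
  induction q with
  | zero => simp
  | succ q ih =>
    calc ‖x ^ ((q + 1) * N + r)‖ = ‖x ^ N * x ^ (q * N + r)‖ := by
          rw [← pow_add]; congr 2; ring
      _ ≤ ‖x ^ N‖ * ‖x ^ (q * N + r)‖ := norm_mul_le _ _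
      _ ≤ ‖x ^ N‖ * (‖x ^ N‖ ^ q * ‖x ^ r‖) := by gcongr
      _ = ‖x ^ N‖ ^ (q + 1) * ‖x ^ r‖ := by ring

theorem summable_norm_pow_of_tendsto_pow_zero {R : Type*} [NormedRing R] {x : R}
    (h : Tendsto (fun k : ℕ => x ^ k) atTop (𝓝 0)) : Summable fun k : ℕ => ‖x ^ k‖ := by
  obtain ⟨N, hxN, hN⟩ : ∃ N, ‖x ^ N‖ < 1 ∧ 0 < N :=
    ((h.norm.eventually (gt_mem_nhds (by simp))).and (eventually_gt_atTop 0)).exists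
  have : NeZero N := ⟨hN.ne'⟩
  have hgeom : Summable fun q : ℕ => ‖x ^ N‖ ^ q :=
    summable_geometric_of_lt_one (norm_nonneg _) hxN
  have hfin : Summable fun r : Fin N => ‖x ^ (r : ℕ)‖ := Summable.of_finite
  have hbound : Summable fun qr : ℕ × Fin N => ‖x ^ N‖ ^ qr.1 * ‖x ^ (qr.2 : ℕ)‖ :=
    hgeom.mul_of_nonneg hfin (fun _ => by positivity) (fun _ => norm_nonneg _)
  rw [← (Nat.divModEquiv N).symm.summable_iff]
  exact hbound.of_nonneg_of_le (fun _ => norm_nonneg _)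
    fun qr => norm_pow_mul_add_le x N qr.1 qr.2

theorem Matrix.summable_pow_of_tendsto_pow_zero {ι α : Type*} [Fintype ι] [DecidableEq ι]
    [NormedRing α] [CompleteSpace α] {Q : Matrix ι ι α}
    (h : Tendsto (fun k : ℕ => Q ^ k) atTop (𝓝 0)) : Summable fun k : ℕ => Q ^ k := by
  let _ := Matrix.linftyOpNormedRing (n := ι) (α := α)
  have : @CompleteSpace (Matrix ι ι α) PseudoMetricSpace.toUniformSpace :=
    inferInstanceAs (CompleteSpace (ι → ι → α))
  exact (summable_norm_pow_of_tendsto_pow_zero h).of_norm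

theorem hasSum_pow_mul_one_sub {α : Type*} [Ring α] [TopologicalSpace α] [IsTopologicalRing α]
    [T2Space α] {x : α} (h : Summable (x ^ ·)) : HasSum (fun k : ℕ => x ^ k * (1 - x)) 1 := by
  simpa [h.tsum_pow_mul_one_sub] using h.hasSum.mul_right (1 - x)

theorem HasSum.dotProduct_mulVec {ι β R : Type*} [Fintype ι] [CommRing R]
    [TopologicalSpace R] [IsTopologicalRing R] {f : β → Matrix ι ι R} {A : Matrix ι ι R}
    (hf : HasSum f A) (u v : ι → R) :
    HasSum (fun b => u ⬝ᵥ (f b *ᵥ v)) (u ⬝ᵥ (A *ᵥ v)) :=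
  hf.map ({ toFun := fun M => u ⬝ᵥ (M *ᵥ v)
            map_zero' := by simp
            map_add' := by simp [add_mulVec, dotProduct_add] } : Matrix ι ι R →+ R)
    (continuous_const.dotProduct (continuous_id.matrix_mulVec continuous_const))

theorem stmt_4_general {n : ℕ} (Pstar : Matrix (Fin n) (Fin n) ℝ) (φ : Fin n → ℝ)
    (D0 : Matrix (Fin n) (Fin n) ℝ) (s : ℝ)
    (hProws : ∀ i, ∑ j, Pstar i j = 1)
    (hφsum : ∑ i, φ i = 1)
    (hQ : Tendsto (fun k : ℕ => (NormedSpace.exp (s • D0) * Pstar) ^ k)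
      atTop (nhds 0)) :
    HasSum
      (fun m : ℕ =>
        if m = 0 then 1 - φ ⬝ᵥ (NormedSpace.exp (s • D0) *ᵥ (fun _ => (1 : ℝ)))
        else φ ⬝ᵥ (((NormedSpace.exp (s • D0) * Pstar) ^ m *
          ((1 - NormedSpace.exp (s • D0)) * Pstar)) *ᵥ (fun _ => (1 : ℝ))))
      1 := by
  set E := NormedSpace.exp (s • D0)
  set Q := E * Pstar
  set e : Fin n → ℝ := fun _ => 1
  have hPe : Pstar *ᵥ e = e := funext fun i => by simp [e, mulVec, dotProduct, hProws i]
  have hφe : φ ⬝ᵥ e = 1 := by simp [e, dotProduct, hφsum]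
  have hQe : (1 - Q) *ᵥ e = e - E *ᵥ e := by
    simp only [Q, sub_mulVec, one_mulVec, ← mulVec_mulVec, hPe]
  have hsum := (hasSum_pow_mul_one_sub (x := Q)
    (summable_pow_of_tendsto_pow_zero hQ)).dotProduct_mulVec φ e
  rw [one_mulVec, hφe] at hsum
  refine (congrArg (HasSum · 1) (funext fun m => ?_)).mpr hsum
  rcases m with _ | m
  · simp [hQe, dotProduct_sub, hφe]
  · simp [← mulVec_mulVec, sub_mulVec, hPe, hQe]

/-- Proposition 2 (long spells): with `P*` row-stochastic, `φ` a stationary probability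
vector, `E = exp(s D0)` and `(E P*)^k → 0`, the numbers `P(L = 0) = 1 - φ E e` and
`P(L = n) = φ (E P*)ⁿ (I - E) P* e` (for `n ≥ 1`) sum to `1`. -/
theorem stmt_4 {n : ℕ} (Pstar : Matrix (Fin n) (Fin n) ℝ) (φ : Fin n → ℝ)
    (D0 : Matrix (Fin n) (Fin n) ℝ) (s : ℝ) (hs : 0 < s)
    (hPnonneg : ∀ i j, 0 ≤ Pstar i j) (hProws : ∀ i, ∑ j, Pstar i j = 1)
    (hφnonneg : ∀ i, 0 ≤ φ i) (hφsum : ∑ i, φ i = 1)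
    (hφstat : Matrix.vecMul φ Pstar = φ)
    (hQ : Tendsto (fun k : ℕ => (NormedSpace.exp (s • D0) * Pstar) ^ k)
      atTop (nhds 0)) :
    HasSum
      (fun m : ℕ =>
        if m = 0 then 1 - φ ⬝ᵥ (NormedSpace.exp (s • D0) *ᵥ (fun _ => (1 : ℝ)))
        else φ ⬝ᵥ (((NormedSpace.exp (s • D0) * Pstar) ^ m *
          ((1 - NormedSpace.exp (s • D0)) * Pstar)) *ᵥ (fun _ => (1 : ℝ))))
      1 :=
  stmt_4_general Pstar φ D0 s hProws hφsum hQ
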